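/- Let α ∈ (0, π/2), Δ = Δ(α) and let {T_t}_{t∈Δ} be a C₀-semigroup on a Banach space X. If x₀ ∈ X is a distributionally semi-irregular vector, then for every t₀ ∈ Δ the vector T_{t₀} x₀ is also distributionally semi-irregular; that is, the set of distributionally semi-irregular vectors is invariant under every operator of the semigroup. -/

import Mathlib

open MeasureTheory Filter Set

noncomputable section

/-- The complex sector `Δ(α) = {r e^{iθ} : r ≥ 0, |θ| ≤ α}`. -/
def sector (α : ℝ) : Set ℂ := {z : ℂ | |Complex.arg z| ≤ α}

/-- `Δ_r = {t ∈ Δ(α) : |t| < r}`. -/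
def sectorBall (α r : ℝ) : Set ℂ := {z ∈ sector α | ‖z‖ < r}

/-- Upper density of a set `A` with respect to the sector `Δ(α)`. -/
def udens (α : ℝ) (A : Set ℂ) : ℝ :=
  limsup (fun r : ℝ =>
    (volume (A ∩ sectorBall α r)).toReal / (volume (sectorBall α r)).toReal) atTop

/-- Lower density of a set `A` with respect to the sector `Δ(α)`. -/
def ldens (α : ℝ) (A : Set ℂ) : ℝ :=
  liminf (fun r : ℝ =>
    (volume (A ∩ sectorBall α r)).toReal / (volume (sectorBall α r)).toReal) atTop

/-- The filter expressing `|t| → ∞` along `t ∈ A`. -/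
def alongAbs (A : Set ℂ) : Filter ℂ :=
  (atTop.comap (fun z : ℂ => ‖z‖)) ⊓ 𝓟 A

/-- A `C₀`-semigroup of continuous linear operators indexed by the sector `Δ(α)`. -/
structure CZeroSemigroup (α : ℝ) (𝕜 X : Type*) [NontriviallyNormedField 𝕜]
    [NormedAddCommGroup X] [NormedSpace 𝕜 X] where
  T : ℂ → X →L[𝕜] X
  map_zero' : T 0 = ContinuousLinearMap.id 𝕜 X
  map_add' : ∀ s ∈ sector α, ∀ t ∈ sector α, T (s + t) = (T s).comp (T t)
  cont' : ∀ x : X, ContinuousOn (fun t => T t x) (sector α)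

variable {α : ℝ} {𝕜 X : Type*} [NontriviallyNormedField 𝕜]
  [NormedAddCommGroup X] [NormedSpace 𝕜 X]

/-- Distributional sensitivity. -/
def DistSensitive (S : CZeroSemigroup α 𝕜 X) : Prop :=
  ∃ δ > (0:ℝ), ∀ x : X, ∀ ε > (0:ℝ), ∃ y : X, ‖x - y‖ < ε ∧
    udens α {t ∈ sector α | δ < ‖S.T t x - S.T t y‖} = 1

/-- Distributionally unbounded vector. -/
def DistUnbounded (S : CZeroSemigroup α 𝕜 X) (x : X) : Prop :=
  ∃ A : Set ℂ, A ⊆ sector α ∧ MeasurableSet A ∧ udens α A = 1 ∧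
    Tendsto (fun t => ‖S.T t x‖) (alongAbs A) atTop

/-- Distributionally semi-irregular vector. -/
def DistSemiIrregular (S : CZeroSemigroup α 𝕜 X) (x : X) : Prop :=
  ∃ A B : Set ℂ, A ⊆ sector α ∧ B ⊆ sector α ∧ MeasurableSet A ∧ MeasurableSet B ∧
    udens α A = 1 ∧ udens α B = 1 ∧
    Tendsto (fun t => ‖S.T t x‖) (alongAbs A) (nhds 0) ∧
    ∃ δ > (0:ℝ), ∀ t ∈ B, δ ≤ ‖S.T t x‖

/-- Distributionally irregular vector. -/
def DistIrregular (S : CZeroSemigroup α 𝕜 X) (x : X) : Prop :=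
  ∃ A B : Set ℂ, A ⊆ sector α ∧ B ⊆ sector α ∧ MeasurableSet A ∧ MeasurableSet B ∧
    udens α A = 1 ∧ udens α B = 1 ∧
    Tendsto (fun t => ‖S.T t x‖) (alongAbs A) (nhds 0) ∧
    Tendsto (fun t => ‖S.T t x‖) (alongAbs B) atTop

/-- Distributionally chaotic pair. -/
def DistChaoticPair (S : CZeroSemigroup α 𝕜 X) (x y : X) : Prop :=
  ∃ δ > (0:ℝ), ∀ ε > (0:ℝ),
    udens α {t ∈ sector α | ‖S.T t x - S.T t y‖ < ε} = 1 ∧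
    udens α {t ∈ sector α | δ < ‖S.T t x - S.T t y‖} = 1

/-- Distributionally scrambled set. -/
def DistScrambled (S : CZeroSemigroup α 𝕜 X) (K : Set X) : Prop :=
  ∀ x ∈ K, ∀ y ∈ K, x ≠ y → DistChaoticPair S x y

/-!
The set `A` along which `T_t x₀ → 0` can be kept, because `T_t T_{t₀} x₀ = T_{t₀} T_t x₀` and
`T_{t₀}` is bounded.
For the lower bound one takes `B' = {t ∈ Δ : t + t₀ ∈ B}`. For `α ≤ π/2` the sector
`Δ = {z : ‖z‖ cos α ≤ re z}` is a convex cone, so translation by `t₀` maps `Δ_r` into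
`Δ_{r + |t₀|}`; hence `μ(B' ∩ Δ_r) ≥ μ(B ∩ Δ_r) - (μ(Δ_{r+|t₀|}) - μ(Δ_r))`, and the error
is `O(r)` while `μ(Δ_r)` grows like `r²`, so `B'` has upper density at least that of `B`.
-/

open Topology Pointwise

open Complex in
theorem mem_sector_iff_norm_mul_cos_le_re {α : ℝ} (hα₀ : 0 ≤ α) (hαπ : α ≤ Real.pi) {z : ℂ} :
    z ∈ sector α ↔ ‖z‖ * Real.cos α ≤ z.re := by
  rcases eq_or_ne z 0 with rfl | hz
  · simp [sector, hα₀]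
  rw [← norm_mul_cos_arg z, ← Real.cos_abs (arg z), mul_le_mul_iff_right₀ (norm_pos_iff.2 hz)]
  exact (Real.strictAntiOn_cos.le_iff_ge ⟨hα₀, hαπ⟩ ⟨abs_nonneg _, abs_arg_le_pi z⟩).symm

theorem add_mem_sector {α : ℝ} (hα : α ≤ Real.pi / 2) {z w : ℂ}
    (hz : z ∈ sector α) (hw : w ∈ sector α) : z + w ∈ sector α := by
  have hα₀ : 0 ≤ α := (abs_nonneg _).trans hz
  have hαπ : α ≤ Real.pi := hα.trans (by linarith [Real.pi_pos])
  have hcos : 0 ≤ Real.cos α := Real.cos_nonneg_of_neg_pi_div_two_le_of_le (by linarith) hα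
  rw [mem_sector_iff_norm_mul_cos_le_re hα₀ hαπ] at hz hw ⊢
  calc ‖z + w‖ * Real.cos α ≤ (‖z‖ + ‖w‖) * Real.cos α := by gcongr; exact norm_add_le z w
    _ ≤ (z + w).re := by rw [Complex.add_re]; linarith

theorem measurableSet_sector (α : ℝ) : MeasurableSet (sector α) :=
  measurableSet_le Complex.measurable_arg.abs measurable_const

theorem measurableSet_sectorBall (α r : ℝ) : MeasurableSet (sectorBall α r) :=
  (measurableSet_sector α).inter (measurableSet_lt measurable_norm measurable_const)

theorem sectorBall_mono (α : ℝ) {r s : ℝ} (h : r ≤ s) : sectorBall α r ⊆ sectorBall α s :=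
  fun _ hz => ⟨hz.1, hz.2.trans_le h⟩

theorem measure_sectorBall_ne_top (α r : ℝ) : volume (sectorBall α r) ≠ ⊤ := by
  refine ((measure_mono fun z hz => ?_).trans_lt (measure_ball_lt_top (x := (0 : ℂ)) (r := r))).ne
  simpa using hz.2

theorem sectorBall_eq_smul (α : ℝ) {r : ℝ} (hr : 0 < r) :
    sectorBall α r = r • sectorBall α 1 := by
  ext z
  rw [mem_smul_set_iff_inv_smul_mem₀ hr.ne', Complex.real_smul]
  simp only [sectorBall, sector, Set.mem_ofPred_eq,
    Complex.arg_real_mul z (inv_pos.2 hr), norm_mul, Complex.norm_real, Real.norm_eq_abs,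
    abs_of_pos (inv_pos.2 hr), inv_mul_lt_iff₀ hr, mul_one]

theorem toReal_measure_sectorBall (α : ℝ) {r : ℝ} (hr : 0 < r) :
    (volume (sectorBall α r)).toReal = r ^ 2 * (volume (sectorBall α 1)).toReal := by
  rw [sectorBall_eq_smul α hr, Measure.addHaar_smul, Complex.finrank_real_complex,
    abs_of_pos (pow_pos hr 2), ENNReal.toReal_mul, ENNReal.toReal_ofReal (pow_pos hr 2).le]

theorem tendsto_measure_sectorBall_add_sub_div (α c : ℝ) :
    Tendsto (fun r => ((volume (sectorBall α (r + c))).toReal -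
      (volume (sectorBall α r)).toReal) / (volume (sectorBall α r)).toReal) atTop (𝓝 0) := by
  have hc : Tendsto (fun r : ℝ => (1 + c / r) ^ 2 - 1) atTop (𝓝 0) := by
    simpa using (((tendsto_const_nhds (x := (1 : ℝ))).add
      ((tendsto_const_nhds (x := c)).div_atTop tendsto_id)).pow 2).sub_const 1
  rcases eq_or_ne (volume (sectorBall α 1)).toReal 0 with hd | hd
  · refine tendsto_const_nhds.congr' ?_
    filter_upwards [eventually_gt_atTop 0] with r hr
    simp [toReal_measure_sectorBall α hr, hd]
  refine hc.congr' ?_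
  filter_upwards [eventually_gt_atTop 0, eventually_gt_atTop (-c)] with r hr hrc
  rw [toReal_measure_sectorBall α hr, toReal_measure_sectorBall α (by linarith)]
  field_simp

def densityRatio (α : ℝ) (A : Set ℂ) (r : ℝ) : ℝ :=
  (volume (A ∩ sectorBall α r)).toReal / (volume (sectorBall α r)).toReal

theorem densityRatio_nonneg (α : ℝ) (A : Set ℂ) (r : ℝ) : 0 ≤ densityRatio α A r := by
  unfold densityRatio; positivity

theorem densityRatio_le_one (α : ℝ) (A : Set ℂ) (r : ℝ) : densityRatio α A r ≤ 1 :=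
  div_le_one_of_le₀ (ENNReal.toReal_mono (measure_sectorBall_ne_top α r)
    (measure_mono inter_subset_right)) ENNReal.toReal_nonneg

theorem isBoundedUnder_le_densityRatio (α : ℝ) (A : Set ℂ) :
    IsBoundedUnder (· ≤ ·) atTop (densityRatio α A) :=
  isBoundedUnder_of ⟨1, densityRatio_le_one α A⟩

theorem isBoundedUnder_ge_densityRatio (α : ℝ) (A : Set ℂ) :
    IsBoundedUnder (· ≥ ·) atTop (densityRatio α A) :=
  isBoundedUnder_of ⟨0, densityRatio_nonneg α A⟩

theorem udens_le_one (α : ℝ) (A : Set ℂ) : udens α A ≤ 1 :=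
  limsup_le_of_le (isBoundedUnder_ge_densityRatio α A).isCoboundedUnder_le
    (Eventually.of_forall (densityRatio_le_one α A))

theorem udens_le_udens_of_eventually_le_add {A A' : Set ℂ} {e : ℝ → ℝ}
    (he : Tendsto (fun r => e r / (volume (sectorBall α r)).toReal) atTop (𝓝 0))
    (h : ∀ᶠ r in atTop, (volume (A ∩ sectorBall α r)).toReal ≤
      (volume (A' ∩ sectorBall α r)).toReal + e r) :
    udens α A ≤ udens α A' := by
  have hle : densityRatio α A ≤ᶠ[atTop]
      densityRatio α A' + fun r => e r / (volume (sectorBall α r)).toReal := by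
    filter_upwards [h] with r hr
    rw [Pi.add_apply, densityRatio, densityRatio, ← add_div]
    exact div_le_div_of_nonneg_right hr ENNReal.toReal_nonneg
  calc udens α A
      ≤ limsup (densityRatio α A' + fun r => e r / (volume (sectorBall α r)).toReal) atTop :=
        limsup_le_limsup hle (isBoundedUnder_ge_densityRatio α A).isCoboundedUnder_le
          (isBoundedUnder_le_add (isBoundedUnder_le_densityRatio α A') he.isBoundedUnder_le)
    _ ≤ udens α A' + limsup (fun r => e r / (volume (sectorBall α r)).toReal) atTop :=
        limsup_add_le (isBoundedUnder_ge_densityRatio α A') (isBoundedUnder_le_densityRatio α A')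
          he.isBoundedUnder_ge.isCoboundedUnder_le he.isBoundedUnder_le
    _ = udens α A' := by rw [he.limsup_eq, add_zero]

theorem measure_inter_sectorBall_le_add {α : ℝ} (hα : α ≤ Real.pi / 2) {t₀ : ℂ}
    (ht₀ : t₀ ∈ sector α) (B : Set ℂ) (r : ℝ) :
    volume (B ∩ sectorBall α r) ≤ volume ({t ∈ sector α | t + t₀ ∈ B} ∩ sectorBall α r) +
      (volume (sectorBall α (r + ‖t₀‖)) - volume (sectorBall α r)) := by
  set D := (· + -t₀) ⁻¹' sectorBall α r
  have hD : MeasurableSet D := measurable_add_const (-t₀) (measurableSet_sectorBall α r)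
  have hvolD : volume D = volume (sectorBall α r) := measure_preimage_add_right _ _ _
  have hD_sub : D ⊆ sectorBall α (r + ‖t₀‖) := by
    intro z hz
    have hnorm := norm_add_le (z + -t₀) t₀
    rw [neg_add_cancel_right] at hnorm
    exact ⟨neg_add_cancel_right z t₀ ▸ add_mem_sector hα hz.1 ht₀, by linarith [hz.2]⟩
  have hBD : B ∩ D = (· + -t₀) ⁻¹' ({t ∈ sector α | t + t₀ ∈ B} ∩ sectorBall α r) := by
    ext z
    simp only [D, mem_inter_iff, mem_preimage, mem_sep_iff, neg_add_cancel_right]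
    exact ⟨fun h => ⟨⟨h.2.1, h.1⟩, h.2⟩, fun h => ⟨h.1.2, h.2⟩⟩
  have hcover : B ∩ sectorBall α r ⊆ (B ∩ D) ∪ (sectorBall α (r + ‖t₀‖) \ D) := by
    intro z hz
    by_cases hzD : z ∈ D
    · exact Or.inl ⟨hz.1, hzD⟩
    · exact Or.inr ⟨sectorBall_mono α (by linarith [norm_nonneg t₀]) hz.2, hzD⟩
  calc volume (B ∩ sectorBall α r) ≤ volume (B ∩ D) + volume (sectorBall α (r + ‖t₀‖) \ D) :=
        (measure_mono hcover).trans (measure_union_le _ _)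
    _ = _ := by
      rw [hBD, measure_preimage_add_right, measure_sdiff hD_sub hD.nullMeasurableSet
        (hvolD ▸ measure_sectorBall_ne_top α r), hvolD]

theorem udens_le_udens_preimage_add {α : ℝ} (hα : α ≤ Real.pi / 2) {t₀ : ℂ}
    (ht₀ : t₀ ∈ sector α) (B : Set ℂ) :
    udens α B ≤ udens α {t ∈ sector α | t + t₀ ∈ B} := by
  refine udens_le_udens_of_eventually_le_add (tendsto_measure_sectorBall_add_sub_div α ‖t₀‖)
    (Eventually.of_forall fun r => ?_)
  have hfin := measure_sectorBall_ne_top α (r + ‖t₀‖)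
  have hmono : volume (sectorBall α r) ≤ volume (sectorBall α (r + ‖t₀‖)) :=
    measure_mono (sectorBall_mono α (by linarith [norm_nonneg t₀]))
  have hsub_fin : volume (sectorBall α (r + ‖t₀‖)) - volume (sectorBall α r) ≠ ⊤ :=
    ne_top_of_le_ne_top hfin tsub_le_self
  have hinter_fin : volume ({t ∈ sector α | t + t₀ ∈ B} ∩ sectorBall α r) ≠ ⊤ :=
    measure_ne_top_of_subset inter_subset_right (measure_sectorBall_ne_top α r)
  have h := ENNReal.toReal_mono (ENNReal.add_ne_top.2 ⟨hinter_fin, hsub_fin⟩)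
    (measure_inter_sectorBall_le_add hα ht₀ B r)
  rwa [ENNReal.toReal_add hinter_fin hsub_fin, ENNReal.toReal_sub_of_le hmono hfin] at h

namespace CZeroSemigroup

theorem T_add_apply (S : CZeroSemigroup α 𝕜 X) {s t : ℂ} (hs : s ∈ sector α)
    (ht : t ∈ sector α) (x : X) : S.T (s + t) x = S.T s (S.T t x) := by
  rw [S.map_add' s hs t ht, ContinuousLinearMap.comp_apply]

theorem T_apply_comm (S : CZeroSemigroup α 𝕜 X) {s t : ℂ} (hs : s ∈ sector α)
    (ht : t ∈ sector α) (x : X) : S.T s (S.T t x) = S.T t (S.T s x) := by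
  rw [← S.T_add_apply hs ht, ← S.T_add_apply ht hs, add_comm]

end CZeroSemigroup

theorem stmt_5_general (α : ℝ) (hα' : α < Real.pi / 2)
    {𝕜 X : Type*} [NontriviallyNormedField 𝕜] [NormedAddCommGroup X] [NormedSpace 𝕜 X]
    (S : CZeroSemigroup α 𝕜 X)
    (x₀ : X) (hx₀ : DistSemiIrregular S x₀) :
    ∀ t₀ ∈ sector α, DistSemiIrregular S (S.T t₀ x₀) := by
  intro t₀ ht₀
  obtain ⟨A, B, hA, -, hAm, hBm, hAd, hBd, hA_lim, δ, hδ, hB_ge⟩ := hx₀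
  refine ⟨A, {t ∈ sector α | t + t₀ ∈ B}, hA, sep_subset _ _, hAm,
    (measurableSet_sector α).inter (measurable_add_const t₀ hBm), hAd,
    le_antisymm (udens_le_one α _) (hBd ▸ udens_le_udens_preimage_add hα'.le ht₀ B), ?_, δ, hδ,
    fun t ht => S.T_add_apply ht.1 ht₀ x₀ ▸ hB_ge _ ht.2⟩
  have hbound : ∀ᶠ t in alongAbs A, ‖S.T t (S.T t₀ x₀)‖ ≤ ‖S.T t₀‖ * ‖S.T t x₀‖ := by
    filter_upwards [mem_inf_of_right (mem_principal_self A)] with t ht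
    rw [S.T_apply_comm (hA ht) ht₀]
    exact (S.T t₀).le_opNorm _
  exact squeeze_zero' (Eventually.of_forall fun _ => norm_nonneg _) hbound
    (by simpa using hA_lim.const_mul ‖S.T t₀‖)

/-- The set of distributionally semi-irregular vectors is invariant under the semigroup. -/
theorem stmt_5 (α : ℝ) (hα : 0 < α) (hα' : α < Real.pi / 2)
    {𝕜 X : Type*} [NontriviallyNormedField 𝕜] [NormedAddCommGroup X] [NormedSpace 𝕜 X]
    [CompleteSpace X] (S : CZeroSemigroup α 𝕜 X)
    (x₀ : X) (hx₀ : DistSemiIrregular S x₀) :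
    ∀ t₀ ∈ sector α, DistSemiIrregular S (S.T t₀ x₀) :=
  stmt_5_general α hα' S x₀ hx₀
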